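/- At P₄ = (1,0,0) the Jacobian of the event-horizon system has eigenvalues 1-3β+3γ, 3γ-3β-1, and -(3/2)(β-γ-1). In particular, if β = γ then the eigenvalues are 1, -1, 3/2, so P₄ is a saddle. -/

import Mathlib

/-- Vector field of the Model 2 autonomous system with future event horizon IR cutoff. -/
noncomputable def Gev (α β γ b : ℝ) (p : ℝ × ℝ × ℝ) : ℝ × ℝ × ℝ :=
  let x := p.1; let y := p.2.1; let z := p.2.2
  (x * ((1 + 3 * β - 3 * γ + 3 * α * z / (1 - z)) * (1 - x)
        - 2 * y * (1 + Real.sqrt y / b)),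
   y * (2 * (1 - y) * (1 + Real.sqrt y / b)
        - x * (1 + 3 * β - 3 * γ + 3 * α * z / (1 - z))),
   z * (1 - z) / 2 *
     (4 - 2 * y * (1 + Real.sqrt y / b)
        - x * (1 + 3 * β - 3 * γ + 3 * α * z / (1 - z))))

/-- Jacobian matrix of `Gev` at a point, via Fréchet derivatives. -/
noncomputable def Jev (α β γ b : ℝ) (p : ℝ × ℝ × ℝ) : Matrix (Fin 3) (Fin 3) ℝ :=
  let e : Fin 3 → ℝ × ℝ × ℝ := ![(1, 0, 0), (0, 1, 0), (0, 0, 1)]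
  Matrix.of fun i j =>
    fderiv ℝ (fun q => ![(Gev α β γ b q).1, (Gev α β γ b q).2.1,
      (Gev α β γ b q).2.2] i) p (e j)

/-! At `P₄ = (1, 0, 0)` the Jacobian is upper triangular, so its eigenvalues are its diagonal
entries. The cutoff parameter `b` drops out because `√y` only enters through `y * √y`, whose
derivative vanishes at `y = 0` (its difference quotient is `√y`). -/

open Polynomial

theorem Matrix.IsUpperTriangular.roots_charpoly {R n : Type*} [CommRing R] [IsDomain R]
    [Fintype n] [DecidableEq n] [LinearOrder n] {M : Matrix n n R} (h : M.IsUpperTriangular) :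
    M.charpoly.roots = Finset.univ.val.map fun i => M i i := by
  rw [Matrix.charpoly_of_isUpperTriangular M h, Finset.prod_eq_multiset_prod]
  simpa [Multiset.map_map] using roots_multiset_prod_X_sub_C (Finset.univ.val.map fun i => M i i)

theorem hasDerivAt_mul_sqrt_zero : HasDerivAt (fun y : ℝ => y * √y) 0 0 := by
  rw [hasDerivAt_iff_tendsto_slope]
  have hslope : slope (fun y : ℝ => y * √y) 0 = Real.sqrt := by
    ext y
    rcases eq_or_ne y 0 with rfl | hy
    · simp
    · simp [slope_def_field, hy]
  rw [hslope]
  simpa using (Real.continuous_sqrt.tendsto 0).mono_left nhdsWithin_le_nhds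

theorem hasFDerivAt_snd_fst_mul_one_add_sqrt_div (b x z : ℝ) :
    HasFDerivAt (fun q : ℝ × ℝ × ℝ => q.2.1 * (1 + √q.2.1 / b))
      ((ContinuousLinearMap.fst ℝ ℝ ℝ).comp (ContinuousLinearMap.snd ℝ ℝ (ℝ × ℝ))) (x, 0, z) := by
  have h1 : HasDerivAt (fun y : ℝ => y * (1 + √y / b)) 1 0 := by
    rw [show (fun y : ℝ => y * (1 + √y / b)) = fun y => y + y * √y / b by ext y; ring]
    simpa using (hasDerivAt_id' (0 : ℝ)).fun_add (hasDerivAt_mul_sqrt_zero.div_const b)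
  simpa [Function.comp_def] using
    h1.comp_hasFDerivAt (x, (0 : ℝ), z) (hasFDerivAt_snd (𝕜 := ℝ) (p := (x, (0 : ℝ), z))).fst

theorem hasFDerivAt_const_add_mul_snd_snd_div_one_sub (c a x y : ℝ) :
    HasFDerivAt (fun q : ℝ × ℝ × ℝ => c + a * q.2.2 / (1 - q.2.2))
      (a • (ContinuousLinearMap.snd ℝ ℝ ℝ).comp (ContinuousLinearMap.snd ℝ ℝ (ℝ × ℝ)))
      (x, y, 0) := by
  have h1 : HasDerivAt (fun z : ℝ => c + a * z / (1 - z)) a 0 := by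
    have h := ((hasDerivAt_id (0 : ℝ)).const_mul a).div
      ((hasDerivAt_id (0 : ℝ)).const_sub 1) (by norm_num)
    simpa using h.const_add c
  simpa [Function.comp_def] using
    h1.comp_hasFDerivAt (x, y, (0 : ℝ)) (hasFDerivAt_snd (𝕜 := ℝ) (p := (x, y, (0 : ℝ)))).snd

section JacobianAtP4

local notation "P₄" => ((1 : ℝ), (0 : ℝ), (0 : ℝ))

variable (α β γ b : ℝ)

theorem fderiv_Gev_fst_P4 (v : ℝ × ℝ × ℝ) :
    fderiv ℝ (fun q => (Gev α β γ b q).1) P₄ v = (3 * γ - 3 * β - 1) * v.1 - 2 * v.2.1 := by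
  have hx := hasFDerivAt_fst (𝕜 := ℝ) (p := P₄)
  have h := hx.fun_mul
    (((hasFDerivAt_const_add_mul_snd_snd_div_one_sub (1 + 3 * β - 3 * γ) (3 * α) 1 0).fun_mul
      ((hasFDerivAt_const 1 _).fun_sub hx)).fun_sub
      ((hasFDerivAt_snd_fst_mul_one_add_sqrt_div b 1 0).const_mul 2))
  have hG : (fun q => (Gev α β γ b q).1) = fun q : ℝ × ℝ × ℝ => q.1 *
      ((1 + 3 * β - 3 * γ + 3 * α * q.2.2 / (1 - q.2.2)) * (1 - q.1) -
        2 * (q.2.1 * (1 + √q.2.1 / b))) := by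
    ext q; simp only [Gev]; ring
  rw [hG, h.fderiv]
  simp only [mul_zero, sub_zero, div_one, add_zero, zero_sub, smul_neg, sub_self, zero_smul,
    one_smul, Real.sqrt_zero, zero_div, mul_one, sub_apply, neg_apply, smul_apply,
    ContinuousLinearMap.coe_fst', smul_eq_mul, ContinuousLinearMap.comp_apply,
    ContinuousLinearMap.coe_snd', sub_left_inj]
  ring

theorem fderiv_Gev_snd_fst_P4 (v : ℝ × ℝ × ℝ) :
    fderiv ℝ (fun q => (Gev α β γ b q).2.1) P₄ v = (1 - 3 * β + 3 * γ) * v.2.1 := by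
  have hx := hasFDerivAt_fst (𝕜 := ℝ) (p := P₄)
  have hy := (hasFDerivAt_snd (𝕜 := ℝ) (p := P₄)).fst
  have h := (((hasFDerivAt_const 1 _).fun_sub hy).const_mul 2).fun_mul
      (hasFDerivAt_snd_fst_mul_one_add_sqrt_div b 1 0) |>.fun_sub
    ((hx.fun_mul hy).fun_mul
      (hasFDerivAt_const_add_mul_snd_snd_div_one_sub (1 + 3 * β - 3 * γ) (3 * α) 1 0))
  have hG : (fun q => (Gev α β γ b q).2.1) = fun q : ℝ × ℝ × ℝ =>
      2 * (1 - q.2.1) * (q.2.1 * (1 + √q.2.1 / b)) -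
        q.1 * q.2.1 * (1 + 3 * β - 3 * γ + 3 * α * q.2.2 / (1 - q.2.2)) := by
    ext q; simp only [Gev]; ring
  rw [hG, h.fderiv]
  simp only [sub_zero, mul_one, Real.sqrt_zero, zero_div, add_zero, zero_sub, smul_neg, zero_smul,
    neg_zero, mul_zero, div_one, one_smul, zero_add, sub_apply, smul_apply,
    ContinuousLinearMap.comp_apply, ContinuousLinearMap.coe_snd', ContinuousLinearMap.coe_fst',
    smul_eq_mul]
  ring

theorem fderiv_Gev_snd_snd_P4 (v : ℝ × ℝ × ℝ) :
    fderiv ℝ (fun q => (Gev α β γ b q).2.2) P₄ v = 3 / 2 * (1 - β + γ) * v.2.2 := by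
  have hx := hasFDerivAt_fst (𝕜 := ℝ) (p := P₄)
  have hz := (hasFDerivAt_snd (𝕜 := ℝ) (p := P₄)).snd
  have h := ((hz.fun_mul ((hasFDerivAt_const 1 _).fun_sub hz)).const_mul (1 / 2)).fun_mul
    (((hasFDerivAt_const 4 _).fun_sub
      ((hasFDerivAt_snd_fst_mul_one_add_sqrt_div b 1 0).const_mul 2)).fun_sub
      (hx.fun_mul
        (hasFDerivAt_const_add_mul_snd_snd_div_one_sub (1 + 3 * β - 3 * γ) (3 * α) 1 0)))
  have hG : (fun q => (Gev α β γ b q).2.2) = fun q : ℝ × ℝ × ℝ =>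
      1 / 2 * (q.2.2 * (1 - q.2.2)) * (4 - 2 * (q.2.1 * (1 + √q.2.1 / b)) -
        q.1 * (1 + 3 * β - 3 * γ + 3 * α * q.2.2 / (1 - q.2.2))) := by
    ext q; simp only [Gev]; ring
  rw [hG, h.fderiv]
  simp only [one_div, sub_zero, mul_one, mul_zero, zero_sub, one_smul, div_one, add_zero, zero_smul,
    Real.sqrt_zero, zero_div, one_mul, smul_neg, neg_zero, zero_add, smul_apply,
    ContinuousLinearMap.comp_apply, ContinuousLinearMap.coe_snd', smul_eq_mul]
  ring

theorem Jev_P4 : Jev α β γ b P₄ =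
    !![3 * γ - 3 * β - 1, -2, 0; 0, 1 - 3 * β + 3 * γ, 0; 0, 0, 3 / 2 * (1 - β + γ)] := by
  ext i j
  fin_cases i <;> fin_cases j <;>
    simp [Jev, fderiv_Gev_fst_P4, fderiv_Gev_snd_fst_P4, fderiv_Gev_snd_snd_P4]

end JacobianAtP4

theorem P4_jacobian_eigenvalues_general (α β γ b : ℝ) :
    (Matrix.charpoly (Jev α β γ b (1, 0, 0))).roots =
      {1 - 3 * β + 3 * γ, 3 * γ - 3 * β - 1, -(3 / 2) * (β - γ - 1)} ∧
    (β = γ →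
      (Matrix.charpoly (Jev α β γ b (1, 0, 0))).roots =
        {1, -1, 3 / 2}) := by
  have hupper : (Jev α β γ b (1, 0, 0)).IsUpperTriangular := by
    intro i j hji
    rw [Jev_P4]
    fin_cases i <;> fin_cases j <;> simp_all
  have hroots : (Jev α β γ b (1, 0, 0)).charpoly.roots =
      {1 - 3 * β + 3 * γ, 3 * γ - 3 * β - 1, -(3 / 2) * (β - γ - 1)} := by
    rw [hupper.roots_charpoly, Jev_P4, Fin.univ_val_map, Multiset.insert_eq_cons,
      Multiset.insert_eq_cons, Multiset.cons_swap,
      show -(3 / 2) * (β - γ - 1) = 3 / 2 * (1 - β + γ) by ring]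
    rfl
  refine ⟨hroots, fun hβγ => ?_⟩
  rw [hroots, hβγ]
  norm_num

theorem P4_jacobian_eigenvalues (α β γ b : ℝ) (hb : 0 < b) :
    (Matrix.charpoly (Jev α β γ b (1, 0, 0))).roots =
      {1 - 3 * β + 3 * γ, 3 * γ - 3 * β - 1, -(3 / 2) * (β - γ - 1)} ∧
    (β = γ →
      (Matrix.charpoly (Jev α β γ b (1, 0, 0))).roots =
        {1, -1, 3 / 2}) :=
  P4_jacobian_eigenvalues_general α β γ b
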